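/- Let σ : ℝ → ℝ be a continuous function that is not equal to any polynomial. Then for every dimension d ≥ 1, the set of shallow neural network functions x ↦ ∑_{i=1}^m a_i σ(w_i · x + b_i) (over all m ≥ 1, a_i, b_i ∈ ℝ, w_i ∈ ℝ^d) is dense in C([0,1]^d, ℝ) with respect to the supremum norm. -/

import Mathlib

/-!
Let `M` be the closure of the span of the ridge functions `σ(w · x + b)`. Mollifying `σ` with a
bump `φ` keeps its ridge functions in `M`, since `(φ ⋆ σ)(w · x + b)` is an average of translates.
Differentiating `λ ↦ f(λ (w · x) + b)` `k` times at `λ = 0` for the smooth `f = φ ⋆ σ` then puts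
`(w · x)^k f⁽ᵏ⁾(b)` in `M`. If `σ` is not a polynomial, some mollification has `f⁽ᵏ⁾(b) ≠ 0`,
since otherwise `σ` would be a pointwise limit of polynomials of degree `≤ k`. So `M` contains
every power `(w · x)^k`, hence every `exp (w · x)`, and these span a point-separating subalgebra,
so `M` is everything by Stone–Weierstrass.
-/

open MeasureTheory Filter Topology Polynomial Convolution Finset

theorem HasDerivAt.mem_submodule_of_isClosed {E : Type*} [NormedAddCommGroup E]
    [NormedSpace ℝ E] {M : Submodule ℝ E} (hM : IsClosed (M : Set E)) {F : ℝ → E} {F' : E}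
    {s : ℝ} (hF : HasDerivAt F F' s) (hFM : ∀ t, F t ∈ M) : F' ∈ M :=
  hM.mem_of_tendsto (hasDerivAt_iff_tendsto_slope.1 hF)
    (Eventually.of_forall fun t => M.smul_mem _ (M.sub_mem (hFM t) (hFM s)))

/-- The integral commutes with the quotient map onto `E ⧸ M`, a normed space as `M` is closed,
and this map kills `f`. -/
theorem Submodule.integral_mem_of_isClosed {α E : Type*} [MeasurableSpace α] {μ : Measure α}
    [NormedAddCommGroup E] [NormedSpace ℝ E] [CompleteSpace E] {M : Submodule ℝ E}
    (hM : IsClosed (M : Set E)) {f : α → E} (hf : ∀ y, f y ∈ M) : ∫ y, f y ∂μ ∈ M := by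
  by_cases hfi : Integrable f μ
  · have h := M.mkQL.integral_comp_comm hfi
    simp only [Submodule.mkQL_apply, M.mkQ_apply, (Submodule.Quotient.mk_eq_zero M).2 (hf _),
      integral_zero] at h
    exact (Submodule.Quotient.mk_eq_zero M).1 h.symm
  · rw [integral_undef hfi]
    exact M.zero_mem

theorem NormedSpace.exp_mem_of_forall_pow_mem {𝔸 : Type*} [NormedRing 𝔸] [NormedAlgebra ℝ 𝔸]
    [CompleteSpace 𝔸] {M : Submodule ℝ 𝔸} (hM : IsClosed (M : Set 𝔸)) {a : 𝔸}
    (ha : ∀ k, a ^ k ∈ M) : NormedSpace.exp a ∈ M := by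
  rw [NormedSpace.exp_eq_tsum ℝ]
  exact hM.mem_of_tendsto (NormedSpace.expSeries_summable' (𝕂 := ℝ) a).hasSum.tendsto_sum_nat
    (Eventually.of_forall fun n => M.sum_mem fun k _ => M.smul_mem _ (ha k))

def polynomialFunctionsDegreeLT (n : ℕ) : Submodule ℝ (ℝ → ℝ) :=
  Submodule.span ℝ (Set.range fun (k : Fin n) (t : ℝ) => t ^ (k : ℕ))

/-- Closed for the topology of pointwise convergence, being finite-dimensional. -/
theorem isClosed_polynomialFunctionsDegreeLT (n : ℕ) :
    IsClosed (polynomialFunctionsDegreeLT n : Set (ℝ → ℝ)) := by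
  have : FiniteDimensional ℝ (polynomialFunctionsDegreeLT n) :=
    FiniteDimensional.span_of_finite ℝ (Set.finite_range _)
  exact Submodule.closed_of_finiteDimensional _

theorem exists_eval_eq_of_mem_polynomialFunctionsDegreeLT {n : ℕ} {f : ℝ → ℝ}
    (hf : f ∈ polynomialFunctionsDegreeLT n) : ∃ p : ℝ[X], ∀ t, f t = p.eval t := by
  obtain ⟨c, rfl⟩ := (Submodule.mem_span_range_iff_exists_fun ℝ).1 hf
  exact ⟨∑ k, C (c k) * X ^ (k : ℕ), fun t => by simp [eval_finsetSum]⟩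

theorem taylor_eq_of_iteratedDeriv_eq_zero {n : ℕ} {f : ℝ → ℝ} (hf : ContDiff ℝ (n + 1) f)
    (h : ∀ t, iteratedDeriv (n + 1) f t = 0) (x : ℝ) :
    f x = ∑ k ∈ range (n + 1), ((k.factorial : ℝ)⁻¹ * x ^ k) * iteratedDeriv k f 0 := by
  rcases eq_or_ne x 0 with rfl | hx
  · simp [Finset.sum_range_succ']
  obtain ⟨x', -, hrem⟩ := taylor_mean_remainder_lagrange_iteratedDeriv hx.symm hf.contDiffOn
  rw [h, zero_mul, zero_div, sub_eq_zero, taylor_within_apply] at hrem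
  rw [hrem]
  refine sum_congr rfl fun k hk => ?_
  rw [sub_zero, smul_eq_mul, iteratedDerivWithin_eq_iteratedDeriv (uniqueDiffOn_uIcc hx.symm)
    (hf.contDiffAt.of_le ?_) Set.left_mem_uIcc]
  exact_mod_cast (mem_range.1 hk).le

theorem mem_polynomialFunctionsDegreeLT_of_iteratedDeriv_eq_zero {n : ℕ} {f : ℝ → ℝ}
    (hf : ContDiff ℝ (n + 1) f) (h : ∀ t, iteratedDeriv (n + 1) f t = 0) :
    f ∈ polynomialFunctionsDegreeLT (n + 1) := by
  refine (Submodule.mem_span_range_iff_exists_fun ℝ).2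
    ⟨fun k => ((k : ℕ).factorial : ℝ)⁻¹ * iteratedDeriv k f 0, funext fun x => ?_⟩
  simp only [Finset.sum_apply, Pi.smul_apply, smul_eq_mul,
    taylor_eq_of_iteratedDeriv_eq_zero hf h x]
  rw [← Fin.sum_univ_eq_sum_range (fun k => ((k.factorial : ℝ)⁻¹ * x ^ k) * iteratedDeriv k f 0)]
  exact sum_congr rfl fun k _ => by ring

theorem ContDiffBump.contDiff_normed_convolution (φ : ContDiffBump (0 : ℝ)) {σ : ℝ → ℝ}
    (hσ : Continuous σ) :
    ContDiff ℝ (⊤ : ℕ∞) (φ.normed volume ⋆[ContinuousLinearMap.lsmul ℝ ℝ] σ) :=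
  φ.hasCompactSupport_normed.contDiff_convolution_left _ φ.contDiff_normed hσ.locallyIntegrable

theorem exists_iteratedDeriv_convolution_ne_zero {σ : ℝ → ℝ} (hσ : Continuous σ)
    (hpoly : ¬ ∃ p : ℝ[X], ∀ t, σ t = p.eval t) (k : ℕ) :
    ∃ (φ : ContDiffBump (0 : ℝ)) (θ : ℝ),
      iteratedDeriv k (φ.normed volume ⋆[ContinuousLinearMap.lsmul ℝ ℝ] σ) θ ≠ 0 := by
  by_contra! h
  have hmem (φ : ContDiffBump (0 : ℝ)) : φ.normed volume ⋆[ContinuousLinearMap.lsmul ℝ ℝ] σ ∈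
      polynomialFunctionsDegreeLT (k + 1) := by
    refine mem_polynomialFunctionsDegreeLT_of_iteratedDeriv_eq_zero
      ((φ.contDiff_normed_convolution hσ).of_le (by exact_mod_cast le_top)) fun t => ?_
    rw [iteratedDeriv_succ, show iteratedDeriv k _ = 0 from funext (h φ)]
    exact deriv_const t 0
  let φ (n : ℕ) : ContDiffBump (0 : ℝ) :=
    ⟨1 / (n + 2), 1 / (n + 1), by positivity,
      one_div_lt_one_div_of_lt (by positivity) (by linarith)⟩
  have hφ : Tendsto (fun n => (φ n).normed volume ⋆[ContinuousLinearMap.lsmul ℝ ℝ] σ) atTop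
      (𝓝 σ) :=
    tendsto_pi_nhds.2 <| ContDiffBump.convolution_tendsto_right_of_continuous
      tendsto_one_div_add_atTop_nhds_zero_nat hσ
  exact hpoly <| exists_eval_eq_of_mem_polynomialFunctionsDegreeLT <|
    (isClosed_polynomialFunctionsDegreeLT _).mem_of_tendsto hφ (.of_forall fun n => hmem _)

namespace ContinuousMap

variable {X : Type*} [TopologicalSpace X] [CompactSpace X]

/-- Proved through the fundamental theorem of calculus in `C(X, ℝ)`, which turns the pointwise
derivatives into a derivative for the sup norm. -/
theorem hasDerivAt_comp_add_smul {H H' : C(ℝ, ℝ)} (hH : ∀ t, HasDerivAt H (H' t) t)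
    (p q : C(X, ℝ)) (s : ℝ) :
    HasDerivAt (fun r : ℝ => H.comp (q + r • p)) (H'.comp (q + s • p) * p) s := by
  set D : ℝ → C(X, ℝ) := fun r => H'.comp (q + r • p) * p
  have hD : Continuous D := ((continuous_postcomp H').comp
    (continuous_const.add (continuous_id.smul continuous_const))).mul continuous_const
  have hFTC : (fun r : ℝ => H.comp (q + r • p)) =
      fun r => H.comp (q + s • p) + ∫ u in s..r, D u := by
    ext r x
    have hev := (evalCLM ℝ x).intervalIntegral_comp_comm (hD.intervalIntegrable (μ := volume) s r)
    have hderiv : ∀ u ∈ Set.uIcc s r, HasDerivAt (fun u => H (q x + u * p x)) (D u x) u :=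
      fun u _ => (hH _).comp u ((hasDerivAt_mul_const (p x)).const_add (q x))
    have hint : IntervalIntegrable (fun u => D u x) volume s r :=
      ((continuous_eval_const x).comp hD).intervalIntegrable s r
    simp only [evalCLM_apply] at hev
    simp only [comp_apply, add_apply, smul_apply, smul_eq_mul, ← hev,
      intervalIntegral.integral_eq_sub_of_hasDerivAt hderiv hint]
    ring
  rw [hFTC]
  exact ((hD.integral_hasStrictDerivAt s s).hasDerivAt).const_add _

variable {M V : Submodule ℝ C(X, ℝ)}

theorem comp_mul_pow_mem (hM : IsClosed (M : Set C(X, ℝ))) {F : ℕ → C(ℝ, ℝ)}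
    (hF : ∀ k t, HasDerivAt (F k) (F (k + 1) t) t) (hF0 : ∀ q ∈ V, (F 0).comp q ∈ M) (k : ℕ)
    {p q : C(X, ℝ)} (hp : p ∈ V) (hq : q ∈ V) : (F k).comp q * p ^ k ∈ M := by
  induction k generalizing q with
  | zero => simpa using hF0 q hq
  | succ k ih =>
    have hderiv := (hasDerivAt_comp_add_smul (hF k) p q 0).mul_const (p ^ k)
    rw [zero_smul, add_zero, mul_assoc, ← pow_succ'] at hderiv
    exact hderiv.mem_submodule_of_isClosed hM fun r => ih (V.add_mem hq (V.smul_mem r hp))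

theorem comp_mem_of_eq_convolution (hM : IsClosed (M : Set C(X, ℝ))) (hV1 : 1 ∈ V)
    {σ : C(ℝ, ℝ)} (hσ : ∀ q ∈ V, σ.comp q ∈ M) {ψ : ℝ → ℝ} (hψ : HasCompactSupport ψ)
    (hψc : Continuous ψ) {g : C(ℝ, ℝ)} (hg : ⇑g = ψ ⋆[ContinuousLinearMap.lsmul ℝ ℝ] ⇑σ)
    {q : C(X, ℝ)} (hq : q ∈ V) : g.comp q ∈ M := by
  set H : ℝ → C(X, ℝ) := fun y => ψ y • σ.comp (q - y • 1)
  have hHi : Integrable H := (hψc.smul ((continuous_postcomp σ).comp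
    (continuous_const.sub (continuous_id.smul continuous_const)))).integrable_of_hasCompactSupport
    hψ.smul_right
  have hgH : g.comp q = ∫ y, H y := by
    ext x
    rw [← evalCLM_apply ℝ x (∫ y, H y), ← (evalCLM ℝ x).integral_comp_comm hHi]
    simp [H, hg, convolution_def]
  rw [hgH]
  exact Submodule.integral_mem_of_isClosed hM fun y =>
    M.smul_mem _ (hσ _ (V.sub_mem hq (V.smul_mem y hV1)))

theorem pow_mem_of_not_polynomial (hM : IsClosed (M : Set C(X, ℝ))) (hV1 : 1 ∈ V)
    {σ : C(ℝ, ℝ)} (hpoly : ¬ ∃ p : ℝ[X], ∀ t, σ t = p.eval t) (hσ : ∀ q ∈ V, σ.comp q ∈ M)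
    {p : C(X, ℝ)} (hp : p ∈ V) (k : ℕ) : p ^ k ∈ M := by
  obtain ⟨φ, θ, hθ⟩ := exists_iteratedDeriv_convolution_ne_zero σ.continuous hpoly k
  set f := φ.normed volume ⋆[ContinuousLinearMap.lsmul ℝ ℝ] ⇑σ
  have hf := φ.contDiff_normed_convolution σ.continuous
  let F (j : ℕ) : C(ℝ, ℝ) :=
    ⟨iteratedDeriv j f, hf.continuous_iteratedDeriv j (by exact_mod_cast le_top)⟩
  have hF (j : ℕ) (t : ℝ) : HasDerivAt (F j) (F (j + 1) t) t := by
    simp only [F, coe_mk, iteratedDeriv_succ]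
    exact (hf.differentiable_iteratedDeriv j (by exact_mod_cast WithTop.coe_lt_top _) t).hasDerivAt
  have hF0 (q : C(X, ℝ)) (hq : q ∈ V) : (F 0).comp q ∈ M :=
    comp_mem_of_eq_convolution hM hV1 hσ (φ.hasCompactSupport_normed (μ := volume))
      φ.continuous_normed (by simp [F, f]) hq
  have hk := comp_mul_pow_mem hM hF hF0 k hp (V.smul_mem θ hV1)
  have hconst : (F k).comp (θ • 1) * p ^ k = iteratedDeriv k f θ • p ^ k := by
    ext x
    simp [F]
  rw [hconst] at hk
  simpa [hθ] using M.smul_mem (iteratedDeriv k f θ)⁻¹ hk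

theorem exp_apply (f : C(X, ℝ)) (x : X) : NormedSpace.exp f x = Real.exp (f x) := by
  rw [Real.exp_eq_exp_ℝ]
  exact NormedSpace.map_exp (evalAlgHom ℝ ℝ x) (continuous_eval_const x) f

/-- Stone–Weierstrass, applied to the span of `exp '' V`, which is already a subalgebra. -/
theorem eq_top_of_forall_exp_mem {V : AddSubmonoid C(X, ℝ)}
    (hV : ((⇑) '' (V : Set C(X, ℝ))).SeparatesPoints) {M : Submodule ℝ C(X, ℝ)}
    (hM : IsClosed (M : Set C(X, ℝ))) (hexp : ∀ p ∈ V, NormedSpace.exp p ∈ M) : M = ⊤ := by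
  let S : Submonoid C(X, ℝ) :=
    { carrier := NormedSpace.exp '' V
      one_mem' := ⟨0, V.zero_mem, NormedSpace.exp_zero⟩
      mul_mem' := by
        rintro _ _ ⟨p, hp, rfl⟩ ⟨q, hq, rfl⟩
        exact ⟨p + q, V.add_mem hp hq, NormedSpace.exp_add⟩ }
  let A := Algebra.adjoin ℝ (S : Set C(X, ℝ))
  have hAM : (A : Set C(X, ℝ)) ⊆ M := by
    change (Subalgebra.toSubmodule A : Set C(X, ℝ)) ⊆ M
    rw [Algebra.adjoin_eq_span, Submonoid.closure_eq, SetLike.coe_subset_coe, Submodule.span_le]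
    rintro _ ⟨p, hp, rfl⟩
    exact hexp p hp
  have hA : A.SeparatesPoints := by
    intro x y hxy
    obtain ⟨_, ⟨p, hp, rfl⟩, hpxy⟩ := hV hxy
    refine ⟨_, ⟨NormedSpace.exp p, Algebra.subset_adjoin ⟨p, hp, rfl⟩, rfl⟩, ?_⟩
    simpa [exp_apply] using hpxy
  have hclosure :=
    congrArg SetLike.coe (subalgebra_topologicalClosure_eq_top_of_separatesPoints A hA)
  rw [Subalgebra.topologicalClosure_coe, Algebra.coe_top] at hclosure
  exact eq_top_iff.2 fun f _ => closure_minimal hAM hM (hclosure ▸ Set.mem_univ f)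

theorem dense_span_comp_of_not_polynomial {σ : C(ℝ, ℝ)}
    (hpoly : ¬ ∃ p : ℝ[X], ∀ t, σ t = p.eval t) (hV1 : 1 ∈ V)
    (hV : ((⇑) '' (V : Set C(X, ℝ))).SeparatesPoints) :
    Dense (Submodule.span ℝ (σ.comp '' (V : Set C(X, ℝ))) : Set C(X, ℝ)) := by
  set M := (Submodule.span ℝ (σ.comp '' (V : Set C(X, ℝ)))).topologicalClosure
  have hM : IsClosed (M : Set C(X, ℝ)) := Submodule.isClosed_topologicalClosure _
  have hσ (q : C(X, ℝ)) (hq : q ∈ V) : σ.comp q ∈ M :=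
    Submodule.le_topologicalClosure _ (Submodule.subset_span ⟨q, hq, rfl⟩)
  exact Submodule.dense_iff_topologicalClosure_eq_top.2 <|
    eq_top_of_forall_exp_mem (V := V.toAddSubmonoid) hV hM fun p hp =>
      NormedSpace.exp_mem_of_forall_pow_mem hM (pow_mem_of_not_polynomial hM hV1 hpoly hσ hp)

end ContinuousMap

section ShallowNetworks

variable {d : ℕ} (K : Set (Fin d → ℝ))

def affineFunctions : Submodule ℝ C(K, ℝ) where
  carrier := {g | ∃ (w : Fin d → ℝ) (b : ℝ), ∀ x : K, g x = ∑ j, w j * (x : Fin d → ℝ) j + b}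
  zero_mem' := ⟨0, 0, by simp⟩
  add_mem' := by
    rintro _ _ ⟨w, b, hg⟩ ⟨v, c, hh⟩
    refine ⟨w + v, b + c, fun x => ?_⟩
    simp only [ContinuousMap.add_apply, hg, hh, Pi.add_apply, add_mul, sum_add_distrib]
    ring
  smul_mem' := by
    rintro r _ ⟨w, b, hg⟩
    exact ⟨r • w, r * b, fun x => by simp [hg, mul_sum, mul_add, mul_assoc]⟩

theorem one_mem_affineFunctions : 1 ∈ affineFunctions K :=
  ⟨0, 1, by simp⟩

theorem separatesPoints_affineFunctions :
    ((⇑) '' (affineFunctions K : Set C(K, ℝ))).SeparatesPoints := by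
  intro x y hxy
  obtain ⟨j, hj⟩ := Function.ne_iff.1 (Subtype.coe_injective.ne hxy)
  let coord : C(K, ℝ) :=
    ⟨fun x => (x : Fin d → ℝ) j, (continuous_apply j).comp continuous_subtype_val⟩
  exact ⟨coord, ⟨coord, ⟨Pi.single j 1, 0, fun x => by simp [coord, Pi.single_apply]⟩, rfl⟩, hj⟩

def shallowNetworks (σ : ℝ → ℝ) : Submodule ℝ C(K, ℝ) where
  carrier := {g | ∃ (m : ℕ), 1 ≤ m ∧ ∃ (a : Fin m → ℝ) (w : Fin m → Fin d → ℝ) (b : Fin m → ℝ),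
    ∀ x : K, g x = ∑ i : Fin m, a i * σ (∑ j : Fin d, w i j * (x : Fin d → ℝ) j + b i)}
  zero_mem' := ⟨1, le_rfl, 0, 0, 0, fun x => by simp⟩
  add_mem' := by
    rintro _ _ ⟨m₁, hm₁, a₁, w₁, b₁, h₁⟩ ⟨m₂, -, a₂, w₂, b₂, h₂⟩
    refine ⟨m₁ + m₂, by omega, Fin.append a₁ a₂, Fin.append w₁ w₂, Fin.append b₁ b₂,
      fun x => ?_⟩
    simp [h₁ x, h₂ x, Fin.sum_univ_add]
  smul_mem' := by
    rintro c _ ⟨m, hm, a, w, b, h⟩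
    exact ⟨m, hm, c • a, w, b, fun x => by simp [h x, mul_sum, mul_assoc]⟩

theorem span_comp_affineFunctions_le_shallowNetworks (σ : C(ℝ, ℝ)) :
    Submodule.span ℝ (σ.comp '' affineFunctions K) ≤ shallowNetworks K σ := by
  rw [Submodule.span_le]
  rintro _ ⟨p, ⟨w, b, hp⟩, rfl⟩
  exact ⟨1, le_rfl, fun _ => 1, fun _ => w, fun _ => b, fun x => by simp [hp]⟩

theorem dense_shallowNetworks [CompactSpace K] {σ : ℝ → ℝ} (hσ : Continuous σ)
    (hpoly : ¬ ∃ p : ℝ[X], ∀ t, σ t = p.eval t) : Dense (shallowNetworks K σ : Set C(K, ℝ)) :=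
  (ContinuousMap.dense_span_comp_of_not_polynomial (σ := ⟨σ, hσ⟩) hpoly
    (one_mem_affineFunctions K) (separatesPoints_affineFunctions K)).mono
    (span_comp_affineFunctions_le_shallowNetworks K ⟨σ, hσ⟩)

end ShallowNetworks

/-- Leshno–Lin–Pinkus–Schocken: for a continuous activation `σ` that is not a
polynomial, the shallow neural networks are dense in `C([0,1]^d, ℝ)` (with the
supremum norm, which induces the topology of `C(K, ℝ)` for compact `K`). -/
theorem universal_approximation_nonpolynomial
    (σ : ℝ → ℝ) (hcont : Continuous σ)
    (hnotpoly : ¬ ∃ p : Polynomial ℝ, ∀ t : ℝ, σ t = p.eval t) :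
    ∀ d : ℕ, 1 ≤ d →
      Dense {g : C(Set.Icc (0 : Fin d → ℝ) 1, ℝ) |
        ∃ (m : ℕ), 1 ≤ m ∧
          ∃ (a : Fin m → ℝ) (w : Fin m → Fin d → ℝ) (b : Fin m → ℝ),
            ∀ x : Set.Icc (0 : Fin d → ℝ) 1,
              g x = ∑ i : Fin m, a i * σ (∑ j : Fin d, w i j * (x : Fin d → ℝ) j + b i)} :=
  fun _ _ => dense_shallowNetworks _ hcont hnotpoly
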